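/- Let c : Nat.Partrec.Code and g : ℕ → ℕ satisfy: for every x : ℕ there is s : ℕ with Nat.Partrec.Code.evaln s c x = some (g x) (so g is total computable via the code c). Then there exist injective primitive recursive functions f_A, f_B : ℕ → ℕ such that: (ℕ, f_A) and (ℕ, f_B) are isomorphic; f_A has at least one infinite orbit; f_A has infinitely many finite orbits, and any two distinct finite orbits of f_A have different cardinalities; and for every isomorphism h from (ℕ, f_A) to (ℕ, f_B), every x : ℕ, and every a : ℕ whose orbit O_{f_A}(a) is finite and such that exactly x finite orbits of f_A have cardinality strictly smaller than that of O_{f_A}(a), one has Nat.Partrec.Code.evaln (h a + 1) c x = some (g x). (Every isomorphism between the two copies bounds the convergence stages of g, which is the hard direction of PRCat(A) = Cone(Δ⁰₁) for Δ⁰₁-categorical injection structures with an infinite orbit and infinitely many finite orbits.) -/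

import Mathlib

/-- The orbit of `a` under `f`. -/
def Orbit (f : ℕ → ℕ) (a : ℕ) : Set ℕ := {b : ℕ | ∃ m n : ℕ, f^[m] a = f^[n] b}

/-- `h` is an isomorphism from the injection structure `(ℕ, f)` to `(ℕ, g)`. -/
def IsInjIso (f g h : ℕ → ℕ) : Prop :=
  Function.Bijective h ∧ ∀ n : ℕ, h (f n) = g (h n)

/-!
Both structures come from one stage construction, driven by a predicate `P k x` read as "the
cycle of length `x + 1` may be started at stage `k`". Stage `k` owns the numbers `2k` and
`2k + 1`. The cycles of lengths `1, 2, 3, …` are laid out one after the other on consecutive odd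
numbers, the cycle of length `x + 1` starting at the first stage `k` after the previous cycle with
`P k x`; all other numbers form a single `ω`-chain, in increasing order. If each `P · x` holds
infinitely often, the result is an `ω`-chain plus exactly one cycle of each finite length, so any
two such structures are isomorphic, and the injection is primitive recursive when `P` is.

For `A` let `P` be always true; for `B` let `P k x` say that `evaln k c x` has converged. An
isomorphism sends the cycle of length `x + 1` of `A` (the finite orbit with exactly `x` smaller
ones) onto the cycle of length `x + 1` of `B`, which lies above the stage where `g x` converged.
-/

open Function

theorem mem_orbit_self (f : ℕ → ℕ) (a : ℕ) : a ∈ Orbit f a := ⟨0, 0, rfl⟩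

theorem orbit_iterate (f : ℕ → ℕ) (a n : ℕ) : Orbit f (f^[n] a) = Orbit f a := by
  ext b
  constructor
  · rintro ⟨m, k, h⟩
    exact ⟨m + n, k, by rwa [iterate_add_apply]⟩
  · rintro ⟨m, k, h⟩
    refine ⟨m, n + k, ?_⟩
    rw [← iterate_add_apply, add_comm, iterate_add_apply, h, ← iterate_add_apply]

theorem infinite_orbit_of_injective_iterate {f : ℕ → ℕ} {a : ℕ}
    (h : Injective fun n => f^[n] a) : (Orbit f a).Infinite :=
  (Set.infinite_range_of_injective h).mono <| by
    rintro _ ⟨n, rfl⟩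
    exact ⟨n, 0, rfl⟩

theorem orbit_eq_image_of_isPeriodicPt {f : ℕ → ℕ} {a p : ℕ} (hf : Injective f)
    (hp : IsPeriodicPt f (p + 1) a) : Orbit f a = (fun j => f^[j] a) '' Set.Iio (p + 1) := by
  ext b
  constructor
  · rintro ⟨m, n, h⟩
    -- `j` is chosen so that `n + j ≡ m` modulo the period
    set j := (m + n * p) % (p + 1)
    refine ⟨j, Nat.mod_lt _ p.succ_pos, hf.iterate n ?_⟩
    have hmod : (n + j) % (p + 1) = m % (p + 1) := by
      rw [Nat.add_mod_mod, show n + (m + n * p) = m + n * (p + 1) by ring,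
        Nat.add_mul_mod_self_right]
    rw [← h, ← iterate_add_apply, ← hp.iterate_mod_apply, hmod, hp.iterate_mod_apply]
  · rintro ⟨j, -, rfl⟩
    exact ⟨j, 0, rfl⟩

theorem IsInjIso.image_orbit {f g h : ℕ → ℕ} (hiso : IsInjIso f g h) (a : ℕ) :
    h '' Orbit f a = Orbit g (h a) := by
  have hit (m b : ℕ) : h (f^[m] b) = g^[m] (h b) := (Semiconj.iterate_right hiso.2 m) b
  ext y
  constructor
  · rintro ⟨b, ⟨m, n, hmn⟩, rfl⟩
    exact ⟨m, n, by rw [← hit, ← hit, hmn]⟩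
  · rintro ⟨m, n, hmn⟩
    obtain ⟨b, rfl⟩ := hiso.1.2 y
    exact ⟨b, ⟨m, n, hiso.1.1 (by rw [hit, hit, hmn])⟩, rfl⟩

theorem Function.Semiconj.injective_of_bijective {α β : Type*} {d : α → β} {σ : α → α}
    {f : β → β} (h : Semiconj d σ f) (hd : Bijective d) (hσ : Injective σ) :
    Injective f := by
  intro a b hab
  obtain ⟨a, rfl⟩ := hd.2 a
  obtain ⟨b, rfl⟩ := hd.2 b
  rw [← h, ← h] at hab
  rw [hσ (hd.1 hab)]

theorem exists_isInjIso_of_semiconj {α : Type*} {σ : α → α} {d e : α → ℕ}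
    {f g : ℕ → ℕ} (hd : Bijective d) (he : Bijective e) (hdf : Semiconj d σ f)
    (heg : Semiconj e σ g) : ∃ h, IsInjIso f g h := by
  let d' := Equiv.ofBijective d hd
  refine ⟨e ∘ d'.symm, he.comp d'.symm.bijective, fun n => ?_⟩
  obtain ⟨a, rfl⟩ := d'.surjective n
  simp only [comp_apply, d', Equiv.ofBijective_apply, ← hdf a, ← heg a,
    Equiv.ofBijective_symm_apply_apply]

theorem Nat.Partrec.Code.evaln_eq_some_of_isSome {c : Nat.Partrec.Code} {x s t u v : ℕ}
    (hs : evaln s c x = some v) (ht : (evaln t c x).isSome) (htu : t ≤ u) :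
    evaln u c x = some v := by
  obtain ⟨w, hw⟩ := Option.isSome_iff_exists.mp ht
  have hwu : w ∈ evaln u c x := evaln_mono htu hw
  have hvw : v = w :=
    Option.mem_unique (evaln_mono (le_max_left s u) hs) (evaln_mono (le_max_right s u) hwu)
  rwa [hvw]

open Filter

namespace CycleConstruction

variable (P : ℕ → ℕ → Bool)

def Idle (k : ℕ) (s : ℕ × ℕ) : Prop := s.2 = 0 ∧ P k s.1 = false

instance (k : ℕ) (s : ℕ × ℕ) : Decidable (Idle P k s) := instDecidableAnd

def advance (s : ℕ × ℕ) : ℕ × ℕ := if s.2 = s.1 then (s.1 + 1, 0) else (s.1, s.2 + 1)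

/- `state P k = (x, i)`: before stage `k` the cycle of length `x + 1` is being built and its
`i`-th element is next; a stage with `i = 0` is idle until `P` allows the cycle to start. -/
def state (k : ℕ) : ℕ × ℕ :=
  Nat.rec (0, 0) (fun k s => if Idle P k s then s else advance s) k

/- `2k + 1` lies on a cycle iff stage `k` is not idle; the last element `2(k₀ + x) + 1` of a cycle
started at stage `k₀` returns to its first element `2k₀ + 1`. -/
def inj (n : ℕ) : ℕ :=
  if Idle P (n / 2) (state P (n / 2)) then n + 1
  else if n % 2 = 1 ∧ (state P (n / 2)).2 = (state P (n / 2)).1 then n - 2 * (state P (n / 2)).1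
  else n + 2

theorem state_zero : state P 0 = (0, 0) := rfl

theorem state_succ (k : ℕ) :
    state P (k + 1) = if Idle P k (state P k) then state P k else advance (state P k) := rfl

variable {P}

section Primrec

open Primrec

theorem primrec_state (hP : Primrec₂ P) : Primrec (state P) := by
  have hidle : PrimrecPred fun p : ℕ × (ℕ × ℕ) => Idle P p.1 p.2 :=
    (Primrec.eq.comp (snd.comp snd) (const 0)).and
      (Primrec.eq.comp (hP.comp fst (fst.comp snd)) (const false))
  have hadvance : Primrec advance :=
    Primrec.ite (Primrec.eq.comp snd fst) (pair (succ.comp fst) (const 0))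
      (pair fst (succ.comp snd))
  exact nat_rec₁ (0, 0) (Primrec.ite hidle snd (hadvance.comp snd))

theorem primrec_inj (hP : Primrec₂ P) : Primrec (inj P) := by
  have hs : Primrec fun n : ℕ => state P (n / 2) :=
    (primrec_state hP).comp (nat_div.comp .id (const 2))
  have hidle : PrimrecPred fun n : ℕ => Idle P (n / 2) (state P (n / 2)) :=
    (Primrec.eq.comp (snd.comp hs) (const 0)).and
      (Primrec.eq.comp (hP.comp (nat_div.comp .id (const 2)) (fst.comp hs)) (const false))
  have hclose : PrimrecPred fun n : ℕ =>
      n % 2 = 1 ∧ (state P (n / 2)).2 = (state P (n / 2)).1 :=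
    (Primrec.eq.comp (nat_mod.comp .id (const 2)) (const 1)).and
      (Primrec.eq.comp (snd.comp hs) (fst.comp hs))
  exact Primrec.ite hidle (succ.comp .id) <| Primrec.ite hclose
    (nat_sub.comp .id (nat_mul.comp (const 2) (fst.comp hs))) (nat_add.comp .id (const 2))

end Primrec

variable (P) in
def Opens (k x : ℕ) : Prop := state P k = (x, 0) ∧ P k x = true

theorem not_idle_of_opens {k x : ℕ} (h : Opens P k x) (i : ℕ) : ¬ Idle P (k + i) (x, i) := by
  rintro ⟨rfl, hi⟩
  simp [h.2] at hi

theorem state_add_of_opens {k x : ℕ} (h : Opens P k x) : ∀ i ≤ x, state P (k + i) = (x, i)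
  | 0, _ => h.1
  | i + 1, hi => by
    rw [← add_assoc, state_succ, state_add_of_opens h i (by omega),
      if_neg (not_idle_of_opens h i), advance, if_neg (by simp only; omega)]

theorem state_add_succ_of_opens {k x : ℕ} (h : Opens P k x) :
    state P (k + x + 1) = (x + 1, 0) := by
  rw [state_succ, state_add_of_opens h x le_rfl, if_neg (not_idle_of_opens h x), advance,
    if_pos rfl]

theorem snd_state_le_fst (k : ℕ) : (state P k).2 ≤ (state P k).1 := by
  induction k with
  | zero => exact le_rfl
  | succ k ih =>
    rw [state_succ]
    unfold advance
    split_ifs <;> omega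

theorem monotone_fst_state : Monotone fun k => (state P k).1 :=
  monotone_nat_of_le_succ fun k => by
    rw [state_succ]
    unfold advance
    split_ifs <;> simp

theorem state_eq_of_state_succ_eq {k x i : ℕ} (h : state P (k + 1) = (x, i + 1)) :
    state P k = (x, i) ∧ ¬ Idle P k (x, i) := by
  rw [state_succ] at h
  split_ifs at h with hidle
  · exact absurd hidle.1 (by simp [h])
  rcases hs : state P k with ⟨y, j⟩
  rw [hs] at h hidle
  unfold advance at h
  split_ifs at h <;> simp only [Prod.mk.injEq] at h
  · omega
  obtain ⟨rfl, rfl⟩ : y = x ∧ j = i := by omega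
  exact ⟨rfl, hidle⟩

theorem opens_sub_of_not_idle {k x i : ℕ} (h : state P k = (x, i)) (hk : ¬ Idle P k (x, i)) :
    i ≤ k ∧ Opens P (k - i) x := by
  induction i generalizing k with
  | zero => exact ⟨Nat.zero_le k, h, by simpa [Idle] using hk⟩
  | succ i ih =>
    cases k with
    | zero => simp [state_zero] at h
    | succ k =>
      obtain ⟨hs, hidle⟩ := state_eq_of_state_succ_eq h
      obtain ⟨hik, hopens⟩ := ih hs hidle
      exact ⟨by omega, by simpa using hopens⟩

theorem opens_unique {k k' x : ℕ} (h : Opens P k x) (h' : Opens P k' x) : k = k' := by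
  wlog hle : k ≤ k' generalizing k k'
  · exact (this h' h (by omega)).symm
  by_contra hne
  by_cases hk' : k' ≤ k + x
  · have := state_add_of_opens h (k' - k) (by omega)
    rw [Nat.add_sub_cancel' hle, h'.1, Prod.mk.injEq] at this
    omega
  · have := monotone_fst_state (P := P) (show k + x + 1 ≤ k' by omega)
    simp only [state_add_succ_of_opens h, h'.1] at this
    omega

theorem exists_opens_of_state_eq {k x : ℕ} (h : state P k = (x, 0)) :
    ∀ d, P (k + d) x = true → ∃ m, Opens P m x := by
  intro d
  induction d generalizing k with
  | zero => exact fun hd => ⟨k, h, hd⟩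
  | succ d ih =>
    intro hd
    by_cases hk : P k x = true
    · exact ⟨k, h, hk⟩
    · have hidle : Idle P k (state P k) := by simpa [Idle, h] using hk
      exact ih (by rw [state_succ, if_pos hidle, h]) (by rwa [add_right_comm, add_assoc])

theorem exists_opens (hP : ∀ x, ∃ᶠ k in atTop, P k x = true) (x : ℕ) :
    ∃ k, Opens P k x := by
  induction x with
  | zero =>
    obtain ⟨k, -, hk⟩ := frequently_atTop.1 (hP 0) 0
    exact exists_opens_of_state_eq (state_zero P) k (by rwa [zero_add])
  | succ x ih =>
    obtain ⟨m, hm⟩ := ih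
    obtain ⟨k, hk, hPk⟩ := frequently_atTop.1 (hP (x + 1)) (m + x + 1)
    exact exists_opens_of_state_eq (state_add_succ_of_opens hm) _
      (by rwa [Nat.add_sub_cancel' hk])

variable (hP : ∀ x, ∃ᶠ k in atTop, P k x = true)

noncomputable def start (x : ℕ) : ℕ := (exists_opens hP x).choose

theorem opens_start (x : ℕ) : Opens P (start hP x) x := (exists_opens hP x).choose_spec

theorem state_start_add {x i : ℕ} (hi : i ≤ x) : state P (start hP x + i) = (x, i) :=
  state_add_of_opens (opens_start hP x) i hi

theorem not_idle_iff {k : ℕ} :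
    ¬ Idle P k (state P k) ↔ ∃ x, ∃ i ≤ x, start hP x + i = k := by
  constructor
  · intro hk
    obtain ⟨hik, hopens⟩ := opens_sub_of_not_idle (Prod.mk.eta (p := state P k)).symm hk
    refine ⟨_, _, snd_state_le_fst (P := P) k, ?_⟩
    rw [opens_unique (opens_start hP _) hopens]
    omega
  · rintro ⟨x, i, hi, rfl⟩
    rw [state_start_add hP hi]
    exact not_idle_of_opens (opens_start hP x) i

noncomputable def cyc (x i : ℕ) : ℕ := 2 * (start hP x + i) + 1

theorem inj_cyc {x i : ℕ} (hi : i ≤ x) :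
    inj P (cyc hP x i) = if i = x then cyc hP x 0 else cyc hP x (i + 1) := by
  have hdiv : cyc hP x i / 2 = start hP x + i := by unfold cyc; omega
  have hmod : cyc hP x i % 2 = 1 := by unfold cyc; omega
  rw [inj, hdiv, state_start_add hP hi, if_neg (not_idle_of_opens (opens_start hP x) i)]
  simp only [hmod, true_and]
  split_ifs <;> unfold cyc <;> omega

theorem eq_and_eq_of_cyc_eq {x y i j : ℕ} (hi : i ≤ x) (hj : j ≤ y)
    (h : cyc hP x i = cyc hP y j) : x = y ∧ i = j := by
  have hk : start hP x + i = start hP y + j := by unfold cyc at h; omega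
  have := (state_start_add hP hi).symm.trans (hk ▸ state_start_add hP hj)
  exact Prod.mk.inj this

variable (P) in
def OnChain (n : ℕ) : Prop := n % 2 = 0 ∨ Idle P (n / 2) (state P (n / 2))

variable (P) in
def chain (m : ℕ) : ℕ := (inj P)^[m] 0

theorem chain_succ (m : ℕ) : chain P (m + 1) = inj P (chain P m) := iterate_succ_apply' _ _ _

theorem inj_two_mul (k : ℕ) :
    inj P (2 * k) = if Idle P k (state P k) then 2 * k + 1 else 2 * k + 2 := by
  rw [inj, show 2 * k / 2 = k by omega]
  split_ifs <;> omega

theorem inj_two_mul_add_one_of_idle {k : ℕ} (h : Idle P k (state P k)) :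
    inj P (2 * k + 1) = 2 * k + 2 := by
  rw [inj, show (2 * k + 1) / 2 = k by omega, if_pos h]

theorem onChain_two_mul_add_one (k : ℕ) : OnChain P (2 * k + 1) ↔ Idle P k (state P k) := by
  rw [OnChain, show (2 * k + 1) / 2 = k by omega]
  exact or_iff_right (by omega)

theorem onChain_inj {n : ℕ} (h : OnChain P n) : OnChain P (inj P n) ∧ n < inj P n := by
  obtain ⟨k, rfl | rfl⟩ : ∃ k, n = 2 * k ∨ n = 2 * k + 1 := ⟨n / 2, by omega⟩
  · rw [inj_two_mul]
    split_ifs with hidle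
    · exact ⟨(onChain_two_mul_add_one k).2 hidle, by omega⟩
    · exact ⟨Or.inl (by omega), by omega⟩
  · rw [inj_two_mul_add_one_of_idle ((onChain_two_mul_add_one k).1 h)]
    exact ⟨Or.inl (by omega), by omega⟩

theorem onChain_chain (m : ℕ) : OnChain P (chain P m) := by
  induction m with
  | zero => exact Or.inl rfl
  | succ m ih => rw [chain_succ]; exact (onChain_inj ih).1

theorem strictMono_chain : StrictMono (chain P) :=
  strictMono_nat_of_lt_succ fun m => by rw [chain_succ]; exact (onChain_inj (onChain_chain m)).2

theorem exists_onChain_preimage {n : ℕ} (h : OnChain P n) (hn : 0 < n) :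
    ∃ p < n, OnChain P p ∧ inj P p = n := by
  obtain ⟨k, rfl | rfl⟩ : ∃ k, n = 2 * k + 2 ∨ n = 2 * k + 1 := ⟨(n - 1) / 2, by omega⟩
  · by_cases hidle : Idle P k (state P k)
    · exact ⟨2 * k + 1, by omega, (onChain_two_mul_add_one k).2 hidle,
        inj_two_mul_add_one_of_idle hidle⟩
    · exact ⟨2 * k, by omega, Or.inl (by omega), by rw [inj_two_mul, if_neg hidle]⟩
  · exact ⟨2 * k, by omega, Or.inl (by omega),
      by rw [inj_two_mul, if_pos ((onChain_two_mul_add_one k).1 h)]⟩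

theorem exists_chain_eq {n : ℕ} (h : OnChain P n) : ∃ m, chain P m = n := by
  induction n using Nat.strong_induction_on with
  | _ n ih =>
    rcases Nat.eq_zero_or_pos n with rfl | hn
    · exact ⟨0, rfl⟩
    obtain ⟨p, hpn, hp, rfl⟩ := exists_onChain_preimage h hn
    obtain ⟨m, rfl⟩ := ih p hpn hp
    exact ⟨m + 1, chain_succ m⟩

theorem not_onChain_cyc {x i : ℕ} (hi : i ≤ x) : ¬ OnChain P (cyc hP x i) := by
  rw [cyc, onChain_two_mul_add_one, state_start_add hP hi]
  exact not_idle_of_opens (opens_start hP x) i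

theorem exists_chain_or_cyc (n : ℕ) :
    (∃ m, chain P m = n) ∨ ∃ x, ∃ i ≤ x, cyc hP x i = n := by
  by_cases h : OnChain P n
  · exact Or.inl (exists_chain_eq h)
  obtain ⟨k, rfl⟩ : ∃ k, n = 2 * k + 1 := ⟨n / 2, by unfold OnChain at h; omega⟩
  obtain ⟨x, i, hi, rfl⟩ := (not_idle_iff hP).1 (mt (onChain_two_mul_add_one k).2 h)
  exact Or.inr ⟨x, i, hi, rfl⟩

abbrev Model : Type := ℕ ⊕ Σ x : ℕ, Fin (x + 1)

def Model.shift : Model → Model := Sum.map Nat.succ (Sigma.map id fun x => finRotate (x + 1))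

theorem Model.shift_injective : Injective Model.shift :=
  Sum.map_injective.2
    ⟨Nat.succ_injective, injective_id.sigma_map fun x => (finRotate (x + 1)).injective⟩

noncomputable def decode : Model → ℕ := Sum.elim (chain P) fun p => cyc hP p.1 p.2

theorem semiconj_decode : Semiconj (decode hP) Model.shift (inj P) := by
  rintro (m | ⟨x, i⟩)
  · exact chain_succ m
  · change cyc hP x (finRotate (x + 1) i) = inj P (cyc hP x i)
    rw [inj_cyc hP i.is_le, coe_finRotate]
    simp only [Fin.ext_iff, Fin.val_last]
    split_ifs <;> rfl

theorem bijective_decode : Bijective (decode hP) := by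
  constructor
  · rintro (m | ⟨x, i⟩) (m' | ⟨y, j⟩) (h : _ = _) <;>
      simp only [decode, Sum.elim_inl, Sum.elim_inr] at h
    · rw [strictMono_chain.injective h]
    · exact absurd (h ▸ onChain_chain m) (not_onChain_cyc hP j.is_le)
    · exact absurd (h.symm ▸ onChain_chain m') (not_onChain_cyc hP i.is_le)
    · obtain ⟨rfl, hij⟩ := eq_and_eq_of_cyc_eq hP i.is_le j.is_le h
      rw [Fin.ext hij]
  · intro n
    rcases exists_chain_or_cyc hP n with ⟨m, rfl⟩ | ⟨x, i, hi, rfl⟩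
    · exact ⟨.inl m, rfl⟩
    · exact ⟨.inr ⟨x, ⟨i, Nat.lt_succ_of_le hi⟩⟩, rfl⟩

theorem injective_inj (hP : ∀ x, ∃ᶠ k in atTop, P k x = true) : Injective (inj P) :=
  (semiconj_decode hP).injective_of_bijective (bijective_decode hP) Model.shift_injective

noncomputable def cycleOrbit (x : ℕ) : Set ℕ := Orbit (inj P) (cyc hP x 0)

theorem iterate_inj_cyc_zero {x i : ℕ} (hi : i ≤ x) :
    (inj P)^[i] (cyc hP x 0) = cyc hP x i := by
  induction i with
  | zero => rfl
  | succ i ih => rw [iterate_succ_apply', ih (by omega), inj_cyc hP (by omega), if_neg (by omega)]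

theorem isPeriodicPt_cyc_zero (x : ℕ) : IsPeriodicPt (inj P) (x + 1) (cyc hP x 0) := by
  rw [IsPeriodicPt, IsFixedPt, iterate_succ_apply', iterate_inj_cyc_zero hP le_rfl,
    inj_cyc hP le_rfl, if_pos rfl]

theorem cycleOrbit_eq_image (x : ℕ) : cycleOrbit hP x = cyc hP x '' Set.Iio (x + 1) := by
  rw [cycleOrbit, orbit_eq_image_of_isPeriodicPt (injective_inj hP) (isPeriodicPt_cyc_zero hP x)]
  exact Set.image_congr fun i hi => iterate_inj_cyc_zero hP (Nat.le_of_lt_succ hi)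

theorem ncard_cycleOrbit (x : ℕ) : (cycleOrbit hP x).ncard = x + 1 := by
  rw [cycleOrbit_eq_image, Set.ncard_image_of_injective _ fun i j h => by unfold cyc at h; omega,
    Set.ncard_Iio_nat]

theorem orbit_cyc {x i : ℕ} (hi : i ≤ x) : Orbit (inj P) (cyc hP x i) = cycleOrbit hP x := by
  rw [← iterate_inj_cyc_zero hP hi, orbit_iterate, cycleOrbit]

theorem infinite_orbit_chain (m : ℕ) : (Orbit (inj P) (chain P m)).Infinite := by
  rw [chain, orbit_iterate]
  exact infinite_orbit_of_injective_iterate strictMono_chain.injective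

theorem finite_orbit_iff {a : ℕ} :
    (Orbit (inj P) a).Finite ↔ ∃ x, Orbit (inj P) a = cycleOrbit hP x := by
  constructor
  · intro ha
    rcases exists_chain_or_cyc hP a with ⟨m, rfl⟩ | ⟨x, i, hi, rfl⟩
    · exact absurd ha (infinite_orbit_chain m)
    · exact ⟨x, orbit_cyc hP hi⟩
  · rintro ⟨x, hx⟩
    rw [hx, cycleOrbit_eq_image]
    exact (Set.finite_Iio _).image _

theorem setOf_finite_orbit_eq_range :
    {O | (∃ a, O = Orbit (inj P) a) ∧ O.Finite} = Set.range (cycleOrbit hP) := by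
  ext O
  constructor
  · rintro ⟨⟨a, rfl⟩, ha⟩
    obtain ⟨x, hx⟩ := (finite_orbit_iff hP).1 ha
    exact ⟨x, hx.symm⟩
  · rintro ⟨x, rfl⟩
    exact ⟨⟨_, rfl⟩, (finite_orbit_iff hP).2 ⟨x, rfl⟩⟩

theorem injective_cycleOrbit : Injective (cycleOrbit hP) := fun x y h => by
  simpa [ncard_cycleOrbit] using congrArg Set.ncard h

theorem orbit_eq_of_ncard_eq (hP : ∀ x, ∃ᶠ k in atTop, P k x = true) {a b : ℕ}
    (ha : (Orbit (inj P) a).Finite)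
    (hb : (Orbit (inj P) b).Finite) (h : (Orbit (inj P) a).ncard = (Orbit (inj P) b).ncard) :
    Orbit (inj P) a = Orbit (inj P) b := by
  obtain ⟨x, hx⟩ := (finite_orbit_iff hP).1 ha
  obtain ⟨y, hy⟩ := (finite_orbit_iff hP).1 hb
  rw [hx, hy, ncard_cycleOrbit, ncard_cycleOrbit, add_left_inj] at h
  rw [hx, hy, h]

theorem ncard_setOf_finite_orbit_ncard_lt (hP : ∀ x, ∃ᶠ k in atTop, P k x = true) {a : ℕ}
    (ha : (Orbit (inj P) a).Finite) :
    {O | (∃ b, O = Orbit (inj P) b) ∧ O.Finite ∧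
      O.ncard < (Orbit (inj P) a).ncard}.ncard + 1 = (Orbit (inj P) a).ncard := by
  obtain ⟨x, hx⟩ := (finite_orbit_iff hP).1 ha
  have hset : {O | (∃ b, O = Orbit (inj P) b) ∧ O.Finite ∧ O.ncard < x + 1} =
      cycleOrbit hP '' Set.Iio x := by
    ext O
    have hfinite := Set.ext_iff.1 (setOf_finite_orbit_eq_range hP) O
    constructor
    · rintro ⟨hO, hfin, hlt⟩
      obtain ⟨y, rfl⟩ := hfinite.1 ⟨hO, hfin⟩
      rw [ncard_cycleOrbit, add_lt_add_iff_right] at hlt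
      exact ⟨y, hlt, rfl⟩
    · rintro ⟨y, hy, rfl⟩
      obtain ⟨hO, hfin⟩ := hfinite.2 ⟨y, rfl⟩
      exact ⟨hO, hfin, by rwa [ncard_cycleOrbit, add_lt_add_iff_right]⟩
  rw [hx, ncard_cycleOrbit, hset, Set.ncard_image_of_injective _ (injective_cycleOrbit hP),
    Set.ncard_Iio_nat]

theorem two_mul_start_lt {b x : ℕ} (hb : (Orbit (inj P) b).Finite)
    (hx : (Orbit (inj P) b).ncard = x + 1) : 2 * start hP x < b := by
  obtain ⟨y, hy⟩ := (finite_orbit_iff hP).1 hb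
  obtain rfl : y = x := by rwa [hy, ncard_cycleOrbit, add_left_inj] at hx
  have hmem : b ∈ cycleOrbit hP y := hy ▸ mem_orbit_self _ b
  rw [cycleOrbit_eq_image] at hmem
  obtain ⟨i, -, rfl⟩ := hmem
  unfold cyc
  omega

end CycleConstruction

theorem primrec₂_evaln_isSome (c : Nat.Partrec.Code) :
    Primrec₂ fun k x => (Nat.Partrec.Code.evaln k c x).isSome :=
  Primrec.option_isSome.comp <| Nat.Partrec.Code.primrec_evaln.comp
    ((Primrec.fst.pair (Primrec.const c)).pair Primrec.snd)

theorem frequently_evaln_isSome {c : Nat.Partrec.Code} {x s v : ℕ}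
    (hs : Nat.Partrec.Code.evaln s c x = some v) :
    ∃ᶠ k in atTop, (Nat.Partrec.Code.evaln k c x).isSome = true :=
  (eventually_atTop.2 ⟨s, fun _ hk =>
    Option.isSome_iff_exists.2 ⟨v, Nat.Partrec.Code.evaln_mono hk hs⟩⟩).frequently

open CycleConstruction

theorem prcat_delta1_injection (c : Nat.Partrec.Code) (g : ℕ → ℕ)
    (hg : ∀ x : ℕ, ∃ s : ℕ, Nat.Partrec.Code.evaln s c x = some (g x)) :
    ∃ fA fB : ℕ → ℕ,
      Primrec fA ∧ Primrec fB ∧ Function.Injective fA ∧ Function.Injective fB ∧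
      (∃ h : ℕ → ℕ, IsInjIso fA fB h) ∧
      (∃ a : ℕ, (Orbit fA a).Infinite) ∧
      {O : Set ℕ | (∃ a : ℕ, O = Orbit fA a) ∧ O.Finite}.Infinite ∧
      (∀ a b : ℕ, (Orbit fA a).Finite → (Orbit fA b).Finite →
        Orbit fA a ≠ Orbit fA b → (Orbit fA a).ncard ≠ (Orbit fA b).ncard) ∧
      (∀ h : ℕ → ℕ, IsInjIso fA fB h → ∀ x a : ℕ, (Orbit fA a).Finite →
        {O : Set ℕ | (∃ b : ℕ, O = Orbit fA b) ∧ O.Finite ∧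
          O.ncard < (Orbit fA a).ncard}.Finite →
        {O : Set ℕ | (∃ b : ℕ, O = Orbit fA b) ∧ O.Finite ∧
          O.ncard < (Orbit fA a).ncard}.ncard = x →
        Nat.Partrec.Code.evaln (h a + 1) c x = some (g x)) := by
  set PA : ℕ → ℕ → Bool := fun _ _ => true
  set PB : ℕ → ℕ → Bool := fun k x => (Nat.Partrec.Code.evaln k c x).isSome
  have hPA : ∀ x, ∃ᶠ k in atTop, PA k x = true := fun _ => Frequently.of_forall fun _ => rfl
  have hPB : ∀ x, ∃ᶠ k in atTop, PB k x = true :=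
    fun x => frequently_evaln_isSome (hg x).choose_spec
  refine ⟨inj PA, inj PB, primrec_inj (Primrec₂.const true),
    primrec_inj (primrec₂_evaln_isSome c), injective_inj hPA, injective_inj hPB,
    exists_isInjIso_of_semiconj (bijective_decode hPA) (bijective_decode hPB)
      (semiconj_decode hPA) (semiconj_decode hPB),
    ⟨chain PA 0, infinite_orbit_chain 0⟩, ?_,
    fun a b ha hb hne hcard => hne (orbit_eq_of_ncard_eq hPA ha hb hcard), ?_⟩
  · rw [setOf_finite_orbit_eq_range hPA]
    exact Set.infinite_range_of_injective (injective_cycleOrbit hPA)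
  · intro h hiso x a ha _ hcount
    have hcardA : (Orbit (inj PA) a).ncard = x + 1 := by
      rw [← ncard_setOf_finite_orbit_ncard_lt hPA ha, hcount]
    have himage := hiso.image_orbit a
    have hfinB : (Orbit (inj PB) (h a)).Finite := himage ▸ ha.image h
    have hcardB : (Orbit (inj PB) (h a)).ncard = x + 1 := by
      rw [← himage, Set.ncard_image_of_injective _ hiso.1.1, hcardA]
    have hstart := two_mul_start_lt hPB hfinB hcardB
    exact Nat.Partrec.Code.evaln_eq_some_of_isSome (hg x).choose_spec (opens_start hPB x).2
      (by omega)
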